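/- arXiv:2503.17330 — 3 statements merged into one kernel-verified Lean document; each statement's English description precedes it below -/
import Mathlib

section
/- Let G be a finite abelian group generated by two commuting elements σ and τ with ord(σ) = d and ord(τ) = ℓ. Then there exist o dividing gcd(d, ℓ) and an integer a with gcd(a, ℓ) = 1 such that G is isomorphic to the group ⟨σ, τ | σ^d = τ^ℓ = σ^{d/o} τ^{-aℓ/o} = 1⟩; equivalently, every relation group of this form arises with (s, r) = (d/o, aℓ/o). -/
/-!
Put `n` for the order of `σ` modulo `⟨τ⟩`. Since `σ` generates `G ⧸ ⟨τ⟩`, we get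
`|G| = n ℓ`, and `σ ^ n` is an element of the cyclic group `⟨τ⟩` of order `o = d / n`.
The elements of order `o` in a cyclic group of order `ℓ` are the powers `τ ^ (a ℓ / o)` with `a`
coprime to `o`, and `a` can be chosen coprime to `ℓ` because `(ℤ/ℓ)ˣ → (ℤ/o)ˣ` is surjective.
-/

theorem exists_coprime_modEq_of_dvd {o ℓ b : ℕ} [NeZero ℓ] (ho : o ∣ ℓ) (hb : b.Coprime o) :
    ∃ a, a.Coprime ℓ ∧ a ≡ b [MOD o] := by
  obtain ⟨u, hu⟩ := ZMod.unitsMap_surjective ho (ZMod.unitOfCoprime b hb)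
  refine ⟨(u : ZMod ℓ).val, ZMod.val_coe_unit_coprime u, ?_⟩
  rw [← ZMod.natCast_eq_natCast_iff, ZMod.natCast_val, ← ZMod.unitsMap_val ho, hu,
    ZMod.coe_unitOfCoprime]

theorem exists_coprime_eq_pow_mul_div_orderOf {G : Type*} [Group G] {τ x : G}
    (hτ : IsOfFinOrder τ) (hx : x ∈ Subgroup.zpowers τ) :
    ∃ a, a.Coprime (orderOf τ) ∧ x = τ ^ (a * (orderOf τ / orderOf x)) := by
  obtain ⟨k, rfl⟩ := hτ.mem_powers_iff_mem_zpowers.mpr hx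
  set ℓ := orderOf τ
  have : NeZero ℓ := ⟨hτ.orderOf_pos.ne'⟩
  have hg : ℓ / orderOf (τ ^ k) = ℓ.gcd k := by
    rw [hτ.orderOf_pow, Nat.div_div_self (Nat.gcd_dvd_left ℓ k) (NeZero.ne ℓ)]
  obtain ⟨a, ha, hmod⟩ := exists_coprime_modEq_of_dvd (Nat.div_dvd_of_dvd (Nat.gcd_dvd_left ℓ k))
    (Nat.coprime_div_gcd_div_gcd (Nat.gcd_pos_of_pos_left k hτ.orderOf_pos)).symm
  refine ⟨a, ha, ?_⟩
  have hmodℓ := hmod.mul_right' (ℓ.gcd k)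
  rw [Nat.div_mul_cancel (Nat.gcd_dvd_left ℓ k), Nat.div_mul_cancel (Nat.gcd_dvd_right ℓ k)]
    at hmodℓ
  rw [hg, pow_eq_pow_iff_modEq]
  exact hmodℓ.symm

theorem card_eq_orderOf_mk_mul_orderOf {G : Type*} [CommGroup G] {σ τ : G}
    (hgen : Subgroup.closure ({σ, τ} : Set G) = ⊤) :
    Nat.card G = orderOf (σ : G ⧸ Subgroup.zpowers τ) * orderOf τ := by
  have hσ : Subgroup.zpowers (σ : G ⧸ Subgroup.zpowers τ) = ⊤ := by
    refine Subgroup.eq_top_iff' _ |>.mpr <| QuotientGroup.mk_surjective.forall.mpr fun g ↦ ?_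
    obtain ⟨m, n, rfl⟩ := Subgroup.mem_closure_pair.mp (hgen ▸ Subgroup.mem_top g)
    have hτ : (τ : G ⧸ Subgroup.zpowers τ) = 1 :=
      (QuotientGroup.eq_one_iff τ).mpr (Subgroup.mem_zpowers τ)
    exact ⟨m, by rw [QuotientGroup.mk_mul, QuotientGroup.mk_zpow, QuotientGroup.mk_zpow, hτ,
      one_zpow, mul_one]⟩
  rw [Subgroup.card_eq_card_quotient_mul_card_subgroup (Subgroup.zpowers τ), Nat.card_zpowers τ,
    ← Nat.card_zpowers (σ : G ⧸ Subgroup.zpowers τ), hσ, Subgroup.card_top]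

theorem stmt_2_general {G : Type*} [CommGroup G] [Fintype G] (σ τ : G) {d ℓ : ℕ}
    (hσ : orderOf σ = d) (hτ : orderOf τ = ℓ)
    (hgen : Subgroup.closure ({σ, τ} : Set G) = ⊤) :
    ∃ o a : ℕ, o ∣ Nat.gcd d ℓ ∧ Nat.Coprime a ℓ ∧
      σ ^ (d / o) = τ ^ (a * (ℓ / o)) ∧ Fintype.card G = d * ℓ / o := by
  subst hσ hτ
  set n := orderOf (σ : G ⧸ Subgroup.zpowers τ)
  have hn : n ∣ orderOf σ := orderOf_map_dvd (QuotientGroup.mk' _) σ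
  have hσn : σ ^ n ∈ Subgroup.zpowers τ :=
    (QuotientGroup.eq_one_iff _).mp (by rw [QuotientGroup.mk_pow, pow_orderOf_eq_one])
  have hdn : orderOf σ / orderOf (σ ^ n) = n := by
    rw [orderOf_pow_of_dvd (orderOf_pos _).ne' hn, Nat.div_div_self hn (orderOf_pos σ).ne']
  obtain ⟨a, ha, hpow⟩ := exists_coprime_eq_pow_mul_div_orderOf (isOfFinOrder_of_finite τ) hσn
  refine ⟨orderOf (σ ^ n), a, Nat.dvd_gcd (orderOf_pow_dvd n) (orderOf_dvd_of_mem_zpowers hσn),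
    ha, by rwa [hdn], ?_⟩
  rw [Fintype.card_eq_nat_card, card_eq_orderOf_mk_mul_orderOf hgen,
    ← Nat.div_mul_right_comm (orderOf_pow_dvd n), hdn]

/-- Classification of finite abelian groups generated by two elements of orders `d` and `ℓ`:
there are `o ∣ gcd(d, ℓ)` and `a` coprime to `ℓ` so that the single extra relation is
`σ^(d/o) = τ^(aℓ/o)`, and the resulting group has order `dℓ/o`. -/
theorem stmt_2 {G : Type*} [CommGroup G] [Fintype G] (σ τ : G) {d ℓ : ℕ}
    (hd : 0 < d) (hℓ : 0 < ℓ) (hσ : orderOf σ = d) (hτ : orderOf τ = ℓ)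
    (hgen : Subgroup.closure ({σ, τ} : Set G) = ⊤) :
    ∃ o a : ℕ, o ∣ Nat.gcd d ℓ ∧ Nat.Coprime a ℓ ∧
      σ ^ (d / o) = τ ^ (a * (ℓ / o)) ∧ Fintype.card G = d * ℓ / o :=
  stmt_2_general σ τ hσ hτ hgen
end

section
/- Let p be a prime, let d be a prime, and let n be a positive integer not divisible by p; let s₁ ≠ s₂ ∈ {1,…,d−1}. Let C be the cyclic group of elements of F̄_p^× killed by gcd(n^d−1, p^d−1), and let H₁ = {g ∈ C : g^{n^d} = g, g^{n − p^{s₁}} = 1} and H₂ = {g ∈ C : g^{n^d} = g, g^{n − p^{s₂}} = 1}. Then |H₁| · |H₂| ≤ gcd(n^d−1, p^d−1) · gcd(n−1, p−1); that is, gcd(n^d−1, p^d−1, n−p^{s₁}) · gcd(n^d−1, p^d−1, n−p^{s₂}) ≤ gcd(n^d−1, p^d−1) · gcd(n−1, p−1). -/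
lemma aux_pow_gcd (m p e f : ℕ) (h1 : (m:ℤ) ∣ (p:ℤ)^e - 1) (h2 : (m:ℤ) ∣ (p:ℤ)^f - 1) :
    (m:ℤ) ∣ (p:ℤ)^(Nat.gcd e f) - 1 := by
  have c1 : ((p:ZMod m))^e = 1 := by
    have := (ZMod.intCast_zmod_eq_zero_iff_dvd ((p:ℤ)^e - 1) m).mpr h1
    push_cast at this
    linear_combination this
  have c2 : ((p:ZMod m))^f = 1 := by
    have := (ZMod.intCast_zmod_eq_zero_iff_dvd ((p:ℤ)^f - 1) m).mpr h2
    push_cast at this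
    linear_combination this
  have hord : orderOf ((p:ZMod m)) ∣ Nat.gcd e f :=
    Nat.dvd_gcd (orderOf_dvd_of_pow_eq_one c1) (orderOf_dvd_of_pow_eq_one c2)
  have h3 : ((p:ZMod m))^(Nat.gcd e f) = 1 := orderOf_dvd_iff_pow_eq_one.mp hord
  exact (ZMod.intCast_zmod_eq_zero_iff_dvd ((p:ℤ)^(Nat.gcd e f) - 1) m).mp
    (by push_cast; linear_combination h3)

/-- For `d` prime, `p` a prime not dividing `n`, and distinct `s₁ ≠ s₂` in `{1,…,d−1}`:
`gcd(n^d−1, p^d−1, n−p^{s₁}) · gcd(n^d−1, p^d−1, n−p^{s₂}) ≤ gcd(n^d−1, p^d−1) · gcd(n−1, p−1)`. -/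
theorem stmt_6 {n d p s₁ s₂ : ℕ} (hd : d.Prime) (hp : p.Prime) (hpn : ¬ p ∣ n)
    (hs₁ : 1 ≤ s₁) (hs₁' : s₁ ≤ d - 1) (hs₂ : 1 ≤ s₂) (hs₂' : s₂ ≤ d - 1)
    (hne : s₁ ≠ s₂) :
    Int.gcd (Int.gcd ((n : ℤ) ^ d - 1) ((p : ℤ) ^ d - 1)) ((n : ℤ) - (p : ℤ) ^ s₁) *
      Int.gcd (Int.gcd ((n : ℤ) ^ d - 1) ((p : ℤ) ^ d - 1)) ((n : ℤ) - (p : ℤ) ^ s₂) ≤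
      Int.gcd ((n : ℤ) ^ d - 1) ((p : ℤ) ^ d - 1) *
        Int.gcd ((n : ℤ) - 1) ((p : ℤ) - 1) := by
  wlog hlt : s₂ < s₁ generalizing s₁ s₂
  · rw [mul_comm]
    exact this hs₂ hs₂' hs₁ hs₁' hne.symm (lt_of_le_of_ne (not_lt.mp hlt) hne)
  set g : ℕ := Int.gcd ((n : ℤ) ^ d - 1) ((p : ℤ) ^ d - 1) with hgdef
  set A₁ : ℕ := Int.gcd (g : ℤ) ((n : ℤ) - (p : ℤ) ^ s₁) with hA₁def
  set A₂ : ℕ := Int.gcd (g : ℤ) ((n : ℤ) - (p : ℤ) ^ s₂) with hA₂def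
  set m : ℕ := Nat.gcd A₁ A₂ with hmdef
  have hp1 : (1:ℤ) < (p:ℤ) := by exact_mod_cast hp.one_lt
  have hpd1 : (1:ℤ) < (p:ℤ)^d := one_lt_pow₀ hp1 hd.pos.ne'
  have hgpos : 0 < g := Int.gcd_pos_of_ne_zero_right _ (by linarith)
  have hA₁g : A₁ ∣ g := by
    have : (A₁:ℤ) ∣ (g:ℤ) := Int.gcd_dvd_left _ _
    exact_mod_cast this
  have hA₂g : A₂ ∣ g := by
    have : (A₂:ℤ) ∣ (g:ℤ) := Int.gcd_dvd_left _ _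
    exact_mod_cast this
  have hm1 : (m:ℤ) ∣ (n:ℤ) - (p:ℤ)^s₁ :=
    (Int.natCast_dvd_natCast.mpr (Nat.gcd_dvd_left A₁ A₂)).trans (Int.gcd_dvd_right _ _)
  have hm2 : (m:ℤ) ∣ (n:ℤ) - (p:ℤ)^s₂ :=
    (Int.natCast_dvd_natCast.mpr (Nat.gcd_dvd_right A₁ A₂)).trans (Int.gcd_dvd_right _ _)
  have hmg : (m:ℤ) ∣ (g:ℤ) := by
    exact_mod_cast (Nat.gcd_dvd_left A₁ A₂).trans hA₁g
  have hmpd : (m:ℤ) ∣ (p:ℤ)^d - 1 := hmg.trans (Int.gcd_dvd_right _ _)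
  -- coprimality of m with p
  have hd1 : d - 1 + 1 = d := Nat.succ_pred_eq_of_pos hd.pos
  have hpow : (p:ℤ)^d = (p:ℤ)^(d-1) * p := by rw [← pow_succ, hd1]
  have hcop : IsCoprime ((p:ℤ)^d - 1) (p:ℤ) :=
    ⟨-1, (p:ℤ)^(d-1), by rw [hpow]; ring⟩
  have hcopm : IsCoprime ((m:ℤ)) (p:ℤ) := hcop.of_isCoprime_of_dvd_left hmpd
  -- m divides p^e - 1 where e = s₁ - s₂
  set e : ℕ := s₁ - s₂ with hedef
  have hse : s₂ + e = s₁ := by omega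
  have hmul : (m:ℤ) ∣ (p:ℤ)^s₂ * ((p:ℤ)^e - 1) := by
    have : (p:ℤ)^s₂ * ((p:ℤ)^e - 1) = ((n:ℤ) - (p:ℤ)^s₂) - ((n:ℤ) - (p:ℤ)^s₁) := by
      rw [← hse, pow_add]; ring
    rw [this]
    exact dvd_sub hm2 hm1
  have hme : (m:ℤ) ∣ (p:ℤ)^e - 1 :=
    (hcopm.pow_right).dvd_of_dvd_mul_left hmul
  -- gcd e d = 1
  have hed : Nat.gcd e d = 1 := by
    have : ¬ d ∣ e := by
      intro h
      have : e = 0 ∨ d ≤ e := by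
        rcases Nat.eq_zero_or_pos e with h0 | h0
        · exact Or.inl h0
        · exact Or.inr (Nat.le_of_dvd h0 h)
      omega
    exact Nat.Coprime.gcd_eq_one ((Nat.coprime_comm.mp (hd.coprime_iff_not_dvd.mpr this)))
  have hmp1 : (m:ℤ) ∣ (p:ℤ) - 1 := by
    have := aux_pow_gcd m p e d hme hmpd
    rwa [hed, pow_one] at this
  have hmn1 : (m:ℤ) ∣ (n:ℤ) - 1 := by
    have hps : ((p:ℤ) - 1) ∣ (p:ℤ)^s₁ - 1 := by
      simpa using sub_dvd_pow_sub_pow (p:ℤ) 1 s₁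
    have : (n:ℤ) - 1 = ((n:ℤ) - (p:ℤ)^s₁) + ((p:ℤ)^s₁ - 1) := by ring
    rw [this]
    exact dvd_add hm1 (hmp1.trans hps)
  set G₂ : ℕ := Int.gcd ((n:ℤ) - 1) ((p:ℤ) - 1) with hG₂def
  have hmG₂ : m ∣ G₂ := by
    have : (m:ℤ) ∣ (G₂:ℤ) := Int.dvd_coe_gcd hmn1 hmp1
    exact_mod_cast this
  have hG₂pos : 0 < G₂ := Int.gcd_pos_of_ne_zero_right _ (by linarith)
  calc A₁ * A₂ = m * Nat.lcm A₁ A₂ := (Nat.gcd_mul_lcm A₁ A₂).symm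
    _ ≤ G₂ * g := Nat.mul_le_mul (Nat.le_of_dvd hG₂pos hmG₂)
        (Nat.le_of_dvd hgpos (Nat.lcm_dvd hA₁g hA₂g))
    _ = g * G₂ := Nat.mul_comm _ _
end

section
/- Let d be a prime, p a prime not dividing n, and s₁ ≠ s₂ ∈ {1,…,d−1}. Then gcd(gcd(n^d−1, p^d−1, n−p^{s₁}), gcd(n^d−1, p^d−1, n−p^{s₂})) divides gcd(n−1, p−1) · d. -/
/-!
Work modulo a common divisor `m`. There `p ^ d = 1`, so `p` has order `1` or `d`, and
`p ^ s₁ = n = p ^ s₂` with `s₁ ≢ s₂ (mod d)` rules out order `d`. Hence `p ≡ 1` and then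
`n ≡ p ^ s₁ ≡ 1`, so `m` even divides `gcd(n − 1, p − 1)`.
-/

theorem eq_one_of_pow_eq_pow_of_pow_prime_eq_one {M : Type*} [Monoid M] {x : M} {d a b : ℕ}
    (hd : d.Prime) (hx : x ^ d = 1) (ha : a < d) (hb : b < d) (hab : a ≠ b)
    (h : x ^ a = x ^ b) : x = 1 := by
  have hfin : IsOfFinOrder x := isOfFinOrder_iff_pow_eq_one.mpr ⟨d, hd.pos, hx⟩
  rcases (Nat.dvd_prime hd).mp (orderOf_dvd_of_pow_eq_one hx) with hord | hord
  · exact orderOf_eq_one_iff.mp hord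
  · rw [hfin.pow_eq_pow_iff_modEq, hord, Nat.ModEq, Nat.mod_eq_of_lt ha,
      Nat.mod_eq_of_lt hb] at h
    exact absurd h hab

theorem dvd_sub_one_of_dvd_sub_pow_of_dvd_pow_prime_sub_one {m : ℕ} {n p : ℤ} {d a b : ℕ}
    (hd : d.Prime) (ha : a < d) (hb : b < d) (hab : a ≠ b) (hp : (m : ℤ) ∣ p ^ d - 1)
    (ha' : (m : ℤ) ∣ n - p ^ a) (hb' : (m : ℤ) ∣ n - p ^ b) :
    (m : ℤ) ∣ n - 1 ∧ (m : ℤ) ∣ p - 1 := by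
  simp only [← ZMod.intCast_eq_intCast_iff_dvd_sub, Int.cast_pow, Int.cast_one] at hp ha' hb' ⊢
  have hp1 : (p : ZMod m) = 1 :=
    eq_one_of_pow_eq_pow_of_pow_prime_eq_one hd hp.symm ha hb hab (ha'.trans hb'.symm)
  refine ⟨?_, hp1.symm⟩
  rw [← ha', hp1, one_pow]

theorem stmt_7_general {n d p s₁ s₂ : ℕ} (hd : d.Prime)
    (hs₁' : s₁ ≤ d - 1) (hs₂' : s₂ ≤ d - 1)
    (hne : s₁ ≠ s₂) :
    Nat.gcd
        (Int.gcd (Int.gcd ((n : ℤ) ^ d - 1) ((p : ℤ) ^ d - 1)) ((n : ℤ) - (p : ℤ) ^ s₁))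
        (Int.gcd (Int.gcd ((n : ℤ) ^ d - 1) ((p : ℤ) ^ d - 1)) ((n : ℤ) - (p : ℤ) ^ s₂)) ∣
      Int.gcd ((n : ℤ) - 1) ((p : ℤ) - 1) * d := by
  set A := Int.gcd (Int.gcd ((n : ℤ) ^ d - 1) ((p : ℤ) ^ d - 1)) ((n : ℤ) - (p : ℤ) ^ s₁)
  set B := Int.gcd (Int.gcd ((n : ℤ) ^ d - 1) ((p : ℤ) ^ d - 1)) ((n : ℤ) - (p : ℤ) ^ s₂)
  have hA : ((A.gcd B : ℕ) : ℤ) ∣ A := Int.natCast_dvd_natCast.mpr (Nat.gcd_dvd_left A B)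
  have hB : ((A.gcd B : ℕ) : ℤ) ∣ B := Int.natCast_dvd_natCast.mpr (Nat.gcd_dvd_right A B)
  have hd1 := hd.one_lt
  obtain ⟨hn1, hp1⟩ := dvd_sub_one_of_dvd_sub_pow_of_dvd_pow_prime_sub_one hd
    (by omega : s₁ < d) (by omega : s₂ < d) hne
    (hA.trans ((Int.gcd_dvd_left _ _).trans (Int.gcd_dvd_right _ _)))
    (hA.trans (Int.gcd_dvd_right _ _)) (hB.trans (Int.gcd_dvd_right _ _))
  exact (Int.dvd_gcd hn1 hp1).mul_right d

/-- For `d` prime, `p` a prime not dividing `n`, and distinct `s₁ ≠ s₂` in `{1,…,d−1}`,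
the gcd of `gcd(n^d−1, p^d−1, n−p^{s₁})` and `gcd(n^d−1, p^d−1, n−p^{s₂})` divides
`gcd(n−1, p−1) · d`. -/
theorem stmt_7 {n d p s₁ s₂ : ℕ} (hd : d.Prime) (hp : p.Prime) (hpn : ¬ p ∣ n)
    (hs₁ : 1 ≤ s₁) (hs₁' : s₁ ≤ d - 1) (hs₂ : 1 ≤ s₂) (hs₂' : s₂ ≤ d - 1)
    (hne : s₁ ≠ s₂) :
    Nat.gcd
        (Int.gcd (Int.gcd ((n : ℤ) ^ d - 1) ((p : ℤ) ^ d - 1)) ((n : ℤ) - (p : ℤ) ^ s₁))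
        (Int.gcd (Int.gcd ((n : ℤ) ^ d - 1) ((p : ℤ) ^ d - 1)) ((n : ℤ) - (p : ℤ) ^ s₂)) ∣
      Int.gcd ((n : ℤ) - 1) ((p : ℤ) - 1) * d :=
  stmt_7_general hd hs₁' hs₂' hne
end
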